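/- Let λ₁ < λ₂ and let ψᵢ ∈ G_{λᵢ} be minimizers of E_{λᵢ} over Σ₁, i = 1,2. Then ‖ψ₂‖_{L⁴} ≤ ‖ψ₁‖_{L⁴}. (The L⁴ norm of ground states is nonincreasing in the interaction parameter.) -/

import Mathlib

open MeasureTheory Real

/-- Membership in the energy space `X`. -/
def InX (ψ : ℝ → ℂ) : Prop :=
  Differentiable ℝ ψ ∧
  Integrable (fun ξ : ℝ => ‖ψ ξ‖ ^ 2) ∧
  Integrable (fun ξ : ℝ => ‖deriv ψ ξ‖ ^ 2) ∧
  Integrable (fun ξ : ℝ => ξ ^ 2 * ‖ψ ξ‖ ^ 2) ∧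
  Integrable (fun ξ : ℝ => ‖ψ ξ‖ ^ 4)

/-- Membership in the unit-charge constraint manifold `Σ₁`. -/
def InSigma1 (ψ : ℝ → ℂ) : Prop := InX ψ ∧ (∫ ξ : ℝ, ‖ψ ξ‖ ^ 2) = 1

/-- The Gross–Pitaevskii energy functional `E_λ`. -/
noncomputable def energy (lam V₀ α : ℝ) (ψ : ℝ → ℂ) : ℝ :=
  (∫ ξ : ℝ, ‖deriv ψ ξ‖ ^ 2) + (∫ ξ : ℝ, ξ ^ 2 * ‖ψ ξ‖ ^ 2)
    + lam / 2 * (∫ ξ : ℝ, ‖ψ ξ‖ ^ 4)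
    - V₀ * (∫ ξ : ℝ, Real.cos (α * ξ) ^ 2 * ‖ψ ξ‖ ^ 2)

/-- `ψ ∈ G_λ` : a minimizer of `E_λ` over `Σ₁`. -/
def IsGroundState (lam V₀ α : ℝ) (ψ : ℝ → ℂ) : Prop :=
  InSigma1 ψ ∧ ∀ φ : ℝ → ℂ, InSigma1 φ → energy lam V₀ α ψ ≤ energy lam V₀ α φ

/-! `E_λ` is affine in `λ` with slope `½ ∫ |ψ|⁴`. Adding the minimality inequalities
`E_{λ₁}(ψ₁) ≤ E_{λ₁}(ψ₂)` and `E_{λ₂}(ψ₂) ≤ E_{λ₂}(ψ₁)` cancels the `λ`-independent part and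
leaves `(λ₂ - λ₁) (‖ψ₂‖₄⁴ - ‖ψ₁‖₄⁴) ≤ 0`. -/

theorem le_of_isMinOn_add_mul {α 𝕜 : Type*} [Field 𝕜] [LinearOrder 𝕜] [IsStrictOrderedRing 𝕜]
    {s : Set α} {g q : α → 𝕜} {a b : 𝕜} {x y : α} (hab : a < b)
    (hx : IsMinOn (fun z => g z + a * q z) s x) (hy : IsMinOn (fun z => g z + b * q z) s y)
    (hxs : x ∈ s) (hys : y ∈ s) : q y ≤ q x := by
  have hxy : g x + a * q x ≤ g y + a * q y := hx hys
  have hyx : g y + b * q y ≤ g x + b * q x := hy hxs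
  have hslope : (b - a) * q y ≤ (b - a) * q x := by linarith
  exact le_of_mul_le_mul_left hslope (sub_pos.mpr hab)

theorem energy_eq_energy_zero_add (lam V₀ α : ℝ) (ψ : ℝ → ℂ) :
    energy lam V₀ α ψ = energy 0 V₀ α ψ + lam / 2 * ∫ ξ : ℝ, ‖ψ ξ‖ ^ 4 := by
  unfold energy
  ring

theorem IsGroundState.isMinOn {lam V₀ α : ℝ} {ψ : ℝ → ℂ} (h : IsGroundState lam V₀ α ψ) :
    IsMinOn (fun φ => energy 0 V₀ α φ + lam / 2 * ∫ ξ : ℝ, ‖φ ξ‖ ^ 4) {φ | InSigma1 φ} ψ :=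
  isMinOn_iff.2 fun φ hφ => by simpa only [← energy_eq_energy_zero_add] using h.2 φ hφ

theorem L4_norm_of_ground_state_antitone (lam₁ lam₂ V₀ α : ℝ) (hlt : lam₁ < lam₂)
    (ψ₁ ψ₂ : ℝ → ℂ)
    (h₁ : IsGroundState lam₁ V₀ α ψ₁) (h₂ : IsGroundState lam₂ V₀ α ψ₂) :
    (∫ ξ : ℝ, ‖ψ₂ ξ‖ ^ 4) ^ ((1 : ℝ) / 4) ≤ (∫ ξ : ℝ, ‖ψ₁ ξ‖ ^ 4) ^ ((1 : ℝ) / 4) := by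
  have hL4 : (∫ ξ : ℝ, ‖ψ₂ ξ‖ ^ 4) ≤ ∫ ξ : ℝ, ‖ψ₁ ξ‖ ^ 4 :=
    le_of_isMinOn_add_mul (q := fun φ : ℝ → ℂ => ∫ ξ : ℝ, ‖φ ξ‖ ^ 4) (by linarith)
      h₁.isMinOn h₂.isMinOn h₁.1 h₂.1
  exact Real.rpow_le_rpow (integral_nonneg fun ξ => by positivity) hL4 (by norm_num)
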